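/- Suppose the linear span of {k_λ : λ ∈ Ω} is dense in H, let t ∈ [0,1], and let A be an invertible bounded linear operator on H. Then A is unitary if and only if ‖A*A‖_{t-ber} ≤ 1 and ‖(A*A)^{-1}‖_{t-ber} ≤ 1. -/

import Mathlib

open ContinuousLinearMap
open scoped InnerProductSpace

/-- The `t`-Berezin norm of `A` with respect to the family `k` of (normalized reproducing
kernel) vectors. -/
noncomputable def tber {E : Type*} [NormedAddCommGroup E] [InnerProductSpace ℂ E]
    [CompleteSpace E] {ι : Type*} (k : ι → E) (t : ℝ) (A : E →L[ℂ] E) : ℝ :=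
  ⨆ p : ι × ι, (t * ‖⟪A (k p.1), k p.2⟫_ℂ‖ + (1 - t) * ‖⟪adjoint A (k p.1), k p.2⟫_ℂ‖)

/-- The Berezin norm of `A` with respect to the family `k`. -/
noncomputable def berNorm {E : Type*} [NormedAddCommGroup E] [InnerProductSpace ℂ E]
    {ι : Type*} (k : ι → E) (A : E →L[ℂ] E) : ℝ :=
  ⨆ p : ι × ι, ‖⟪A (k p.1), k p.2⟫_ℂ‖

/-- The Berezin number of `A` with respect to the family `k`. -/
noncomputable def berNum {E : Type*} [NormedAddCommGroup E] [InnerProductSpace ℂ E]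
    {ι : Type*} (k : ι → E) (A : E →L[ℂ] E) : ℝ :=
  ⨆ l : ι, ‖⟪A (k l), k l⟫_ℂ‖

/-- The modulus `|A| = (A*A)^(1/2)` of an operator, via the continuous functional calculus. -/
noncomputable def absOp {H : Type*} [NormedAddCommGroup H] [InnerProductSpace ℂ H]
    [CompleteSpace H] (A : H →L[ℂ] H) : H →L[ℂ] H :=
  cfc Real.sqrt (adjoint A * A)

/-- Real powers of a (positive) operator via the continuous functional calculus. -/
noncomputable def rpowOp {H : Type*} [NormedAddCommGroup H] [InnerProductSpace ℂ H]
    [CompleteSpace H] (A : H →L[ℂ] H) (r : ℝ) : H →L[ℂ] H :=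
  cfc (fun x : ℝ => x ^ r) A

theorem stmt6 {H : Type*} [NormedAddCommGroup H] [InnerProductSpace ℂ H] [CompleteSpace H]
    {Ω : Type*} [Nonempty Ω] (k : Ω → H) (hk : ∀ l, ‖k l‖ = 1)
    (hdense : Dense (Submodule.span ℂ (Set.range k) : Set H))
    (t : ℝ) (ht : t ∈ Set.Icc (0 : ℝ) 1) (A : H →L[ℂ] H) (hA : IsUnit A) :
    A ∈ unitary (H →L[ℂ] H) ↔
      tber k t (adjoint A * A) ≤ 1 ∧ tber k t (Ring.inverse (adjoint A * A)) ≤ 1 := by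
  obtain ⟨ht0, ht1⟩ := ht
  set B : H →L[ℂ] H := adjoint A * A with hBdef
  have hBsa : IsSelfAdjoint B := by
    rw [hBdef, ← star_eq_adjoint]; exact IsSelfAdjoint.star_mul_self A
  have hBadj : adjoint B = B := hBsa.adjoint_eq
  set C : H →L[ℂ] H := Ring.inverse B with hCdef
  have hBunit : IsUnit B := by
    rw [hBdef, ← star_eq_adjoint]; exact hA.star.mul hA
  have hBC : B * C = 1 := Ring.mul_inverse_cancel _ hBunit
  have hCsa : IsSelfAdjoint C := by
    rw [IsSelfAdjoint, hCdef, ← Ring.inverse_star, hBsa.star_eq]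
  have hCadj : adjoint C = C := hCsa.adjoint_eq
  have hkk : ∀ l m : Ω, ‖⟪k l, k m⟫_ℂ‖ ≤ 1 := by
    intro l m
    calc ‖⟪k l, k m⟫_ℂ‖ ≤ ‖k l‖ * ‖k m‖ := norm_inner_le_norm _ _
      _ = 1 := by rw [hk, hk]; ring
  constructor
  · intro hU
    have hB1 : B = 1 := by
      rw [hBdef, ← star_eq_adjoint]; exact (Unitary.mem_iff.mp hU).1
    have hle : tber k t (1 : H →L[ℂ] H) ≤ 1 := by
      apply ciSup_le
      intro p
      have e1 : ‖⟪(1 : H →L[ℂ] H) (k p.1), k p.2⟫_ℂ‖ ≤ 1 := by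
        simpa using hkk p.1 p.2
      have e2 : ‖⟪adjoint (1 : H →L[ℂ] H) (k p.1), k p.2⟫_ℂ‖ ≤ 1 := by
        rw [← star_eq_adjoint, star_one]
        simpa using hkk p.1 p.2
      nlinarith [norm_nonneg (⟪(1 : H →L[ℂ] H) (k p.1), k p.2⟫_ℂ),
        norm_nonneg (⟪adjoint (1 : H →L[ℂ] H) (k p.1), k p.2⟫_ℂ)]
    constructor
    · rw [hB1]; exact hle
    · rw [hCdef, hB1, Ring.inverse_one]; exact hle
  · rintro ⟨h1, h2⟩
    -- each diagonal Berezin value of a self-adjoint operator is bounded by the tber norm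
    have key : ∀ T : H →L[ℂ] H, adjoint T = T → tber k t T ≤ 1 →
        ∀ l, ‖⟪T (k l), k l⟫_ℂ‖ ≤ 1 := by
      intro T hTadj hT l
      have bdd : BddAbove (Set.range fun p : Ω × Ω =>
          t * ‖⟪T (k p.1), k p.2⟫_ℂ‖ + (1 - t) * ‖⟪adjoint T (k p.1), k p.2⟫_ℂ‖) := by
        refine ⟨‖T‖ + ‖adjoint T‖, ?_⟩
        rintro x ⟨p, rfl⟩
        dsimp only
        have e1 : ‖⟪T (k p.1), k p.2⟫_ℂ‖ ≤ ‖T‖ := by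
          calc ‖⟪T (k p.1), k p.2⟫_ℂ‖ ≤ ‖T (k p.1)‖ * ‖k p.2‖ := norm_inner_le_norm _ _
            _ ≤ (‖T‖ * ‖k p.1‖) * ‖k p.2‖ := by
                have := T.le_opNorm (k p.1)
                have := norm_nonneg (k p.2)
                nlinarith
            _ = ‖T‖ := by rw [hk, hk]; ring
        have e2 : ‖⟪adjoint T (k p.1), k p.2⟫_ℂ‖ ≤ ‖adjoint T‖ := by
          calc ‖⟪adjoint T (k p.1), k p.2⟫_ℂ‖ ≤ ‖adjoint T (k p.1)‖ * ‖k p.2‖ :=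
                norm_inner_le_norm _ _
            _ ≤ (‖adjoint T‖ * ‖k p.1‖) * ‖k p.2‖ := by
                have := (adjoint T).le_opNorm (k p.1)
                have := norm_nonneg (k p.2)
                nlinarith
            _ = ‖adjoint T‖ := by rw [hk, hk]; ring
        have n1 : (0 : ℝ) ≤ ‖⟪T (k p.1), k p.2⟫_ℂ‖ := norm_nonneg _
        have n2 : (0 : ℝ) ≤ ‖⟪adjoint T (k p.1), k p.2⟫_ℂ‖ := norm_nonneg _
        have nT : (0 : ℝ) ≤ ‖T‖ := norm_nonneg _
        have nT' : (0 : ℝ) ≤ ‖adjoint T‖ := norm_nonneg _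
        nlinarith
      have hle := le_ciSup bdd (l, l)
      have hle' := hle.trans hT
      rw [hTadj] at hle'
      linarith [hle']
    have hb := key B hBadj h1
    have hc := key C hCadj h2
    -- show B (k l) = k l for all l
    obtain ⟨A', hAA', hA'A⟩ := isUnit_iff_exists.mp hA
    have hBk : ∀ l, B (k l) = k l := by
      intro l
      set v : H := k l - C (k l) with hv
      have hBCk : B (C (k l)) = k l := by
        have : (B * C) (k l) = (1 : H →L[ℂ] H) (k l) := by rw [hBC]
        simpa [ContinuousLinearMap.mul_apply] using this
      have hBv : B v = B (k l) - k l := by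
        rw [hv, map_sub, hBCk]
      have hAvBv : ⟪A v, A v⟫_ℂ = ⟪B v, v⟫_ℂ := by
        rw [hBdef]
        rw [ContinuousLinearMap.mul_apply, adjoint_inner_left]
      have hkl1 : ⟪k l, k l⟫_ℂ = 1 := by
        rw [inner_self_eq_norm_sq_to_K, hk]; norm_num
      have hBkCk : ⟪B (k l), C (k l)⟫_ℂ = 1 := by
        have := adjoint_inner_left B (C (k l)) (k l)
        rw [hBadj] at this
        rw [← hBadj, adjoint_inner_left, hBCk, hkl1]
      have hexp : ⟪B v, v⟫_ℂ =
          ⟪B (k l), k l⟫_ℂ + ⟪k l, C (k l)⟫_ℂ - 2 := by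
        rw [hBv, hv, inner_sub_left, inner_sub_right, inner_sub_right,
          hBkCk, hkl1]
        ring
      have hnormsq : (‖A v‖ : ℝ) ^ 2 =
          (⟪B (k l), k l⟫_ℂ).re + (⟪C (k l), k l⟫_ℂ).re - 2 := by
        have hswap : (⟪k l, C (k l)⟫_ℂ).re = (⟪C (k l), k l⟫_ℂ).re := by
          rw [← inner_conj_symm (k l) (C (k l))]
          exact Complex.conj_re _
        have hre := congrArg Complex.re (hAvBv.trans hexp)
        have hlhs : (⟪A v, A v⟫_ℂ).re = ‖A v‖ ^ 2 := by
          rw [inner_self_eq_norm_sq_to_K]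
          norm_cast
        rw [hlhs] at hre
        simp only [Complex.sub_re, Complex.add_re, hswap] at hre
        simpa using hre
      have hreb : (⟪B (k l), k l⟫_ℂ).re ≤ 1 := by
        have := Complex.abs_re_le_norm (⟪B (k l), k l⟫_ℂ)
        have hnb := hb l
        calc (⟪B (k l), k l⟫_ℂ).re ≤ |(⟪B (k l), k l⟫_ℂ).re| := le_abs_self _
          _ ≤ ‖⟪B (k l), k l⟫_ℂ‖ := this
          _ ≤ 1 := hnb
      have hrec : (⟪C (k l), k l⟫_ℂ).re ≤ 1 := by
        have := Complex.abs_re_le_norm (⟪C (k l), k l⟫_ℂ)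
        have hnc := hc l
        calc (⟪C (k l), k l⟫_ℂ).re ≤ |(⟪C (k l), k l⟫_ℂ).re| := le_abs_self _
          _ ≤ ‖⟪C (k l), k l⟫_ℂ‖ := this
          _ ≤ 1 := hnc
      have hAv0 : A v = 0 := by
        have h0 : (‖A v‖ : ℝ) ^ 2 ≤ 0 := by rw [hnormsq]; linarith
        have : ‖A v‖ = 0 := by nlinarith [norm_nonneg (A v)]
        exact norm_eq_zero.mp this
      have hv0 : v = 0 := by
        have : (A' * A) v = A' (A v) := rfl
        rw [hA'A, hAv0, map_zero] at this
        simpa using this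
      have h' : k l - C (k l) = 0 := by rw [← hv]; exact hv0
      have hCk : C (k l) = k l := (sub_eq_zero.mp h').symm
      have := hBCk
      rwa [hCk] at this
    have hB1 : B = 1 := by
      apply ContinuousLinearMap.ext_on hdense
      rintro x ⟨l, rfl⟩
      simp [hBk l]
    apply Unitary.mem_iff.mpr
    have hstar : star A * A = 1 := by rw [star_eq_adjoint, ← hBdef, hB1]
    refine ⟨hstar, ?_⟩
    have hstarA : star A = A' := by
      calc star A = star A * (A * A') := by rw [hAA', mul_one]
        _ = (star A * A) * A' := by rw [mul_assoc]
        _ = A' := by rw [hstar, one_mul]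
    rw [hstarA]; exact hAA'
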